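/- The effective shape function 𝒲(x_k - x) = ∑_j W_c(x_k - x̃_j)·W_f(x̃_j - x) satisfies the partition of unity: ∑_{k ∈ ℤ} 𝒲(x_k·h_c - x) = 1 for every x ∈ ℝ, where x̃_j = (j + 1/2)·h_f are the cell-centered fine grid points and h_c = m·h_f. -/

import Mathlib

/-!
Sampled on its own grid, a hat function of width `h` is a partition of unity: at most the two
grid points `⌊y / h⌋` and `⌊y / h⌋ + 1` see `y`, with weights adding up to one. In the double sum
only finitely many fine indices `j` contribute, so the sum over `k` may be taken inside; the
coarse hats then sum to one for each `j`, leaving the fine partition of unity.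
-/

noncomputable def hat (h ζ : ℝ) : ℝ := max 0 (1 - |ζ| / h)

lemma hat_lattice_eq {h : ℝ} (hh : 0 < h) (y : ℝ) (k : ℤ) :
    hat h (k * h - y) = max 0 (1 - |(k : ℝ) - y / h|) := by
  rw [hat, show (k : ℝ) * h - y = ((k : ℝ) - y / h) * h by field_simp, abs_mul, abs_of_pos hh,
    mul_div_cancel_right₀ _ hh.ne']

lemma hat_lattice_eq_zero_of_notMem {h : ℝ} (hh : 0 < h) (y : ℝ) {k : ℤ}
    (hk : k ∉ ({⌊y / h⌋, ⌊y / h⌋ + 1} : Finset ℤ)) : hat h (k * h - y) = 0 := by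
  rw [hat_lattice_eq hh]
  refine max_eq_left (sub_nonpos.mpr ?_)
  simp only [Finset.mem_insert, Finset.mem_singleton, not_or] at hk
  rcases lt_or_gt_of_ne hk.1 with hlt | hgt
  · have hk_le : (k : ℝ) + 1 ≤ ⌊y / h⌋ := by exact_mod_cast hlt
    rw [abs_sub_comm, abs_of_nonneg (by linarith [Int.floor_le (y / h)])]
    linarith [Int.floor_le (y / h)]
  · have hk_ge : (⌊y / h⌋ : ℝ) + 2 ≤ k := by exact_mod_cast (show ⌊y / h⌋ + 2 ≤ k by omega)
    rw [abs_of_nonneg (by linarith [Int.lt_floor_add_one (y / h)])]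
    linarith [Int.lt_floor_add_one (y / h)]

lemma hasSum_hat_lattice {h : ℝ} (hh : 0 < h) (y : ℝ) :
    HasSum (fun k : ℤ => hat h (k * h - y)) 1 := by
  convert hasSum_sum_of_ne_finset_zero (L := .unconditional ℤ)
    (fun k hk => hat_lattice_eq_zero_of_notMem hh y hk)
  set n := ⌊y / h⌋
  have hn : (n : ℝ) ≤ y / h := Int.floor_le _
  have hn' : y / h < n + 1 := Int.lt_floor_add_one _
  rw [Finset.sum_pair (by omega), hat_lattice_eq hh, hat_lattice_eq hh, Int.cast_add, Int.cast_one,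
    abs_of_nonpos (by linarith), abs_of_nonneg (by linarith),
    max_eq_right (by linarith), max_eq_right (by linarith)]
  ring

/-- Partition of unity for the effective cell-centered shape function: with fine cell centers
`x̃_j = (j + 1/2)·h_f`, coarse grid points `x_k = k·h_c`, `h_c = m·h_f`, one has
`∑_{k ∈ ℤ} ∑_{j ∈ ℤ} W_c(x_k - x̃_j)·W_f(x̃_j - x) = 1` for every `x`. -/
theorem effective_shape_partition_of_unity (hf : ℝ) (hhf : 0 < hf)
    (m : ℕ) (hm : 0 < m) (hc : ℝ) (hhc : hc = (m : ℝ) * hf)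
    (Wf Wc : ℝ → ℝ)
    (hWf : ∀ ζ, Wf ζ = max 0 (1 - |ζ| / hf))
    (hWc : ∀ ζ, Wc ζ = max 0 (1 - |ζ| / hc)) :
    ∀ x : ℝ,
      ∑' k : ℤ, (∑' j : ℤ,
        Wc ((k : ℝ) * hc - ((j : ℝ) + 1 / 2) * hf) *
          Wf (((j : ℝ) + 1 / 2) * hf - x)) = 1 := by
  intro x
  obtain rfl : Wf = hat hf := funext hWf
  obtain rfl : Wc = hat hc := funext hWc
  have hhc0 : 0 < hc := hhc ▸ by positivity
  have hcell : ∀ j : ℤ, ((j : ℝ) + 1 / 2) * hf - x = j * hf - (x - hf / 2) := fun j => by ring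
  simp only [hcell]
  set S : Finset ℤ := {⌊(x - hf / 2) / hf⌋, ⌊(x - hf / 2) / hf⌋ + 1}
  have hS : ∀ j ∉ S, hat hf (j * hf - (x - hf / 2)) = 0 :=
    fun j hj => hat_lattice_eq_zero_of_notMem hhf _ hj
  have hcoarse (j : ℤ) := (hasSum_hat_lattice hhc0 (((j : ℝ) + 1 / 2) * hf)).mul_right
    (hat hf (j * hf - (x - hf / 2)))
  calc _ = ∑' k : ℤ, ∑ j ∈ S, hat hc (k * hc - ((j : ℝ) + 1 / 2) * hf) *
        hat hf (j * hf - (x - hf / 2)) :=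
        tsum_congr fun k => tsum_eq_sum fun j hj => by rw [hS j hj, mul_zero]
    _ = ∑ j ∈ S, hat hf (j * hf - (x - hf / 2)) := by
        rw [Summable.tsum_finsetSum fun j _ => (hcoarse j).summable]
        exact Finset.sum_congr rfl fun j _ => by rw [(hcoarse j).tsum_eq, one_mul]
    _ = 1 := ((hasSum_hat_lattice hhf _).tsum_eq ▸ tsum_eq_sum hS).symm
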